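/- Assume Δ has rank at least 2. Let J be a nonempty abelian upper ideal of (Δ⁺, ≼) with J ≠ Δ⁺, set I = H ∩ J (which is automatically an abelian upper ideal), and assume min(I) = {θ − γ : γ ∈ max(Δ⁺ ∖ J)}. Then S(J) ⊆ S(I). (These hypotheses hold when J = a(ᾱ)_max and I = a(ᾱ)_min are the maximal and minimal abelian ideals with rootlet a long simple root ᾱ; the conclusion says that the normaliser of the former contains the normaliser of the latter.) -/
import Mathlib


open scoped InnerProductSpace

/-- An irreducible reduced crystallographic root system, spanning a finite-dimensional
real inner product space, together with a fixed base (set of simple roots) and the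
coefficient function expressing each root in the base. -/
structure RootSystemData (V : Type) [NormedAddCommGroup V] [InnerProductSpace ℝ V]
    [FiniteDimensional ℝ V] where
  roots : Set V
  finite : roots.Finite
  nonzero : ∀ γ ∈ roots, γ ≠ 0
  spans : Submodule.span ℝ roots = ⊤
  reflClosed : ∀ α ∈ roots, ∀ β ∈ roots, β - (2 * ⟪β, α⟫_ℝ / ⟪α, α⟫_ℝ) • α ∈ roots
  crystal : ∀ α ∈ roots, ∀ β ∈ roots, ∃ k : ℤ, 2 * ⟪β, α⟫_ℝ / ⟪α, α⟫_ℝ = (k : ℝ)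
  reduced : ∀ α ∈ roots, ∀ t : ℝ, t • α ∈ roots → t = 1 ∨ t = -1
  irred : ∀ A B : Set V, roots = A ∪ B → (∀ a ∈ A, ∀ b ∈ B, ⟪a, b⟫_ℝ = 0) →
    A = ∅ ∨ B = ∅
  simples : Finset V
  simples_sub : ↑simples ⊆ roots
  simples_indep : LinearIndependent ℝ (Subtype.val : {x : V // x ∈ simples} → V)
  coeff : V → V → ℤ
  coeff_spec : ∀ γ ∈ roots, γ = ∑ α ∈ simples, coeff γ α • α
  coeff_sign : ∀ γ ∈ roots, (∀ α ∈ simples, 0 ≤ coeff γ α) ∨ (∀ α ∈ simples, coeff γ α ≤ 0)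

namespace RootSystemData

variable {V : Type} [NormedAddCommGroup V] [InnerProductSpace ℝ V] [FiniteDimensional ℝ V]
variable (R : RootSystemData V)

/-- The set of positive roots `Δ⁺` (w.r.t. the base `simples`). -/
def posRoots : Set V := {γ | γ ∈ R.roots ∧ ∀ α ∈ R.simples, 0 ≤ R.coeff γ α}

/-- The partial order `μ ≼ ν`: `ν - μ` is a nonnegative integral combination of simple roots. -/
def rle (μ ν : V) : Prop := ∃ c : V → ℕ, ν - μ = ∑ α ∈ R.simples, (c α : ℤ) • α

/-- `θ` is the highest root. -/
def IsHighest (θ : V) : Prop := θ ∈ R.posRoots ∧ ∀ γ ∈ R.roots, R.rle γ θ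

/-- `γ` is a long root: a root of maximal length. -/
def IsLong (γ : V) : Prop := γ ∈ R.roots ∧ ∀ γ' ∈ R.roots, ‖γ'‖ ≤ ‖γ‖

/-- `I` is an upper ideal of `(Δ⁺, ≼)`. -/
def IsUpperIdeal (I : Set V) : Prop :=
  I ⊆ R.posRoots ∧ ∀ ν ∈ I, ∀ γ ∈ R.posRoots, R.rle ν γ → γ ∈ I

/-- `I` is an abelian upper ideal of `(Δ⁺, ≼)`. -/
def IsAbelianIdeal (I : Set V) : Prop :=
  R.IsUpperIdeal I ∧ ∀ γ₁ ∈ I, ∀ γ₂ ∈ I, γ₁ + γ₂ ∉ R.roots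

/-- The set of minimal elements of `M ⊆ Δ⁺` w.r.t. `≼`. -/
def minSet (M : Set V) : Set V := {γ | γ ∈ M ∧ ∀ ν ∈ M, R.rle ν γ → ν = γ}

/-- The set of maximal elements of `M ⊆ Δ⁺` w.r.t. `≼`. -/
def maxSet (M : Set V) : Set V := {γ | γ ∈ M ∧ ∀ ν ∈ M, R.rle γ ν → ν = γ}

/-- `S(I) = {α ∈ Π : ∃ γ ∈ min(I), γ - α ∈ Δ⁺ ∪ {0}}`; the complement `Π ∖ S(I)` is the
set of simple roots of the standard Levi subalgebra of the normaliser of the ideal `I`. -/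
def normS (I : Set V) : Set V :=
  {α | α ∈ R.simples ∧ ∃ γ ∈ R.minSet I, (γ - α ∈ R.posRoots ∨ γ = α)}

/-- `H = {γ ∈ Δ⁺ : (γ, θ) ≠ 0}`. -/
def Hset (θ : V) : Set V := {γ | γ ∈ R.posRoots ∧ ⟪γ, θ⟫_ℝ ≠ 0}

/-- `deg_S(γ) = Σ_{α ∈ S} [γ:α]`. -/
def degS (S : Finset V) (γ : V) : ℤ := ∑ α ∈ S, R.coeff γ α

/-- `I_S = {γ ∈ Δ⁺ : deg_S(γ) ≥ ⌊d(S)/2⌋ + 1}`, where `d(S) = deg_S(θ)`: the abelian ideal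
`g(≥ ⌊hot(p)/2⌋ + 1)` associated with the standard parabolic subalgebra `p(S)`. -/
def idealS (S : Finset V) (θ : V) : Set V :=
  {γ | γ ∈ R.posRoots ∧ R.degS S θ / 2 + 1 ≤ R.degS S γ}

/-- The highest root `θ` is fundamental with `α_θ` the unique simple root not
orthogonal to `θ`, and `(θ, α_θ∨) = 1`. -/
def IsFundamental (θ αθ : V) : Prop :=
  αθ ∈ R.simples ∧ ⟪θ, αθ⟫_ℝ ≠ 0 ∧ (∀ β ∈ R.simples, ⟪θ, β⟫_ℝ ≠ 0 → β = αθ) ∧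
    2 * ⟪θ, αθ⟫_ℝ / ⟪αθ, αθ⟫_ℝ = 1

end RootSystemData

/-- The reflection `s_α`. -/
noncomputable def rsRefl {V : Type} [NormedAddCommGroup V] [InnerProductSpace ℝ V] (α x : V) : V :=
  x - (2 * ⟪x, α⟫_ℝ / ⟪α, α⟫_ℝ) • α

/-- The element of the Weyl group given by the word `l = [α₁, …, α_m]`,
namely `s_{α₁} ∘ ⋯ ∘ s_{α_m}`; its inverse is `wordMap l.reverse`. -/
noncomputable def wordMap {V : Type} [NormedAddCommGroup V] [InnerProductSpace ℝ V] (l : List V) : V → V :=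
  l.foldr (fun α f => rsRefl α ∘ f) id


namespace RootSystemData

attribute [local instance] Classical.propDecidable

variable {V : Type} [NormedAddCommGroup V] [InnerProductSpace ℝ V] [FiniteDimensional ℝ V]
variable (R : RootSystemData V)

lemma inner_self_pos_of_ne {x : V} (hx : x ≠ 0) : (0:ℝ) < ⟪x, x⟫_ℝ := by
  rcases lt_or_eq_of_le (real_inner_self_nonneg (x := x)) with h | h
  · exact h
  · exact absurd (inner_self_eq_zero.mp h.symm) hx

/-! ### Linear algebra of the base -/

lemma sum_zero_real (f : V → ℝ) (h : ∑ β ∈ R.simples, f β • β = 0) :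
    ∀ β ∈ R.simples, f β = 0 := by
  intro β hβ
  have hconv : ∑ i : {x : V // x ∈ R.simples}, f i.1 • i.1 = ∑ β ∈ R.simples, f β • β :=
    Finset.sum_coe_sort R.simples (fun β => f β • β)
  exact linearIndependent_iff'.mp R.simples_indep Finset.univ
      (fun i => f i.1) (by rw [← hconv] at h; simpa using h) ⟨β, hβ⟩ (Finset.mem_univ _)

lemma sum_zero_int (f : V → ℤ) (h : ∑ β ∈ R.simples, f β • β = 0) :
    ∀ β ∈ R.simples, f β = 0 := by
  intro β hβ
  have h1 := R.sum_zero_real (fun β => (f β : ℝ))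
    (by simpa [Int.cast_smul_eq_zsmul] using h) β hβ
  have h2 : ((f β : ℤ) : ℝ) = 0 := h1
  exact_mod_cast h2

lemma rep_unique (f g : V → ℤ)
    (h : ∑ β ∈ R.simples, f β • β = ∑ β ∈ R.simples, g β • β) :
    ∀ β ∈ R.simples, f β = g β := by
  intro β hβ
  have h1 := R.sum_zero_int (fun β => f β - g β)
    (by simp only [sub_smul, Finset.sum_sub_distrib, h, sub_self]) β hβ
  have h2 : f β - g β = 0 := h1
  omega

lemma coeff_unique {γ : V} (hγ : γ ∈ R.roots) (f : V → ℤ)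
    (h : γ = ∑ β ∈ R.simples, f β • β) : ∀ β ∈ R.simples, R.coeff γ β = f β :=
  R.rep_unique _ _ (by rw [← R.coeff_spec γ hγ, ← h])

lemma single_rep {α : V} (hα : α ∈ R.simples) :
    α = ∑ β ∈ R.simples, (if β = α then (1:ℤ) else 0) • β := by
  rw [Finset.sum_eq_single α (fun β _ hne => by rw [if_neg hne, zero_smul])
      (fun h => absurd hα h)]
  rw [if_pos rfl, one_smul]

lemma simple_pos {α : V} (hα : α ∈ R.simples) : α ∈ R.posRoots := by
  refine ⟨R.simples_sub hα, fun β hβ => ?_⟩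
  rw [R.coeff_unique (R.simples_sub hα) _ (R.single_rep hα) β hβ]
  split_ifs <;> omega

lemma exists_pos_coeff {γ : V} (hγ : γ ∈ R.posRoots) :
    ∃ β ∈ R.simples, 0 < R.coeff γ β := by
  by_contra h
  push_neg at h
  have h0 : γ = 0 := by
    rw [R.coeff_spec γ hγ.1]
    apply Finset.sum_eq_zero
    intro β hβ
    have h1 := hγ.2 β hβ
    have h2 := h β hβ
    have h3 : R.coeff γ β = 0 := le_antisymm h2 h1
    simp [h3]
  exact R.nonzero γ hγ.1 h0

lemma pos_add_ne_zero {x y : V} (hx : x ∈ R.posRoots) (hy : y ∈ R.posRoots) :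
    x + y ≠ 0 := by
  intro h
  have h1 : y = -x := by
    have h2 : x + y - x = 0 - x := by rw [h]
    simpa using h2
  have hyeq : y = ∑ β ∈ R.simples, (-(R.coeff x β)) • β := by
    rw [h1]
    conv_lhs => rw [R.coeff_spec x hx.1]
    rw [← Finset.sum_neg_distrib]
    exact Finset.sum_congr rfl (fun β _ => by rw [neg_smul])
  obtain ⟨β, hβ, hβpos⟩ := R.exists_pos_coeff hx
  have := R.coeff_unique hy.1 _ hyeq β hβ
  have := hy.2 β hβ
  omega

lemma pos_of_rep {γ : V} (hγ : γ ∈ R.roots) (f : V → ℤ) (hf : ∀ β ∈ R.simples, 0 ≤ f β)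
    (h : γ = ∑ β ∈ R.simples, f β • β) : γ ∈ R.posRoots :=
  ⟨hγ, fun β hβ => by rw [R.coeff_unique hγ f h β hβ]; exact hf β hβ⟩

lemma rep_add_single {ξ α : V} (hξ : ξ ∈ R.roots) (hα : α ∈ R.simples) :
    ξ + α = ∑ β ∈ R.simples, (R.coeff ξ β + if β = α then 1 else 0) • β := by
  simp only [add_smul, Finset.sum_add_distrib]
  rw [← R.coeff_spec ξ hξ, ← R.single_rep hα]

lemma pos_add_single {ρ α : V} (hρ : ρ ∈ R.posRoots) (hα : α ∈ R.simples)
    (hroot : ρ + α ∈ R.roots) : ρ + α ∈ R.posRoots :=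
  R.pos_of_rep hroot _
    (fun β hβ => by have := hρ.2 β hβ; split_ifs <;> omega)
    (R.rep_add_single hρ.1 hα)

/-! ### The order -/

lemma rle_refl (x : V) : R.rle x x := ⟨fun _ => 0, by simp⟩

lemma rle_trans {x y z : V} (h₁ : R.rle x y) (h₂ : R.rle y z) : R.rle x z := by
  obtain ⟨c, hc⟩ := h₁; obtain ⟨d, hd⟩ := h₂
  refine ⟨fun β => c β + d β, ?_⟩
  have h3 : z - x = (z - y) + (y - x) := by abel
  rw [h3, hc, hd, ← Finset.sum_add_distrib]
  refine Finset.sum_congr rfl (fun β _ => ?_)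
  rw [← add_smul]
  congr 1
  push_cast
  ring

lemma rle_add_single {ξ α : V} (hα : α ∈ R.simples) : R.rle ξ (ξ + α) := by
  refine ⟨fun β => if β = α then 1 else 0, ?_⟩
  rw [add_sub_cancel_left]
  have h : ∀ β, (((if β = α then (1:ℕ) else 0) : ℕ) : ℤ) = (if β = α then (1:ℤ) else 0) := by
    intro β; split_ifs <;> simp
  simp only [h]
  exact R.single_rep hα

lemma rle_sub_single {γ α : V} (hα : α ∈ R.simples) : R.rle (γ - α) γ := by
  refine ⟨fun β => if β = α then 1 else 0, ?_⟩
  rw [sub_sub_cancel]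
  have h : ∀ β, (((if β = α then (1:ℕ) else 0) : ℕ) : ℤ) = (if β = α then (1:ℤ) else 0) := by
    intro β; split_ifs <;> simp
  simp only [h]
  exact R.single_rep hα

lemma coeff_of_rle {x μ : V} (hx : x ∈ R.roots) (hμ : μ ∈ R.roots) {c : V → ℕ}
    (h : x - μ = ∑ β ∈ R.simples, (c β : ℤ) • β) :
    ∀ β ∈ R.simples, R.coeff x β = R.coeff μ β + c β := by
  have key : ∑ β ∈ R.simples, R.coeff x β • β
      = ∑ β ∈ R.simples, (R.coeff μ β + (c β : ℤ)) • β := by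
    simp only [add_smul, Finset.sum_add_distrib]
    rw [← R.coeff_spec μ hμ, ← h, ← R.coeff_spec x hx]
    abel
  exact R.rep_unique _ _ key

lemma exists_max {M : Set V} (hM : M ⊆ R.posRoots) {ν : V} (hν : ν ∈ M) :
    ∃ μ, μ ∈ R.maxSet M ∧ R.rle ν μ := by
  have hfin : {x | x ∈ M ∧ R.rle ν x}.Finite :=
    R.finite.subset (fun x hx => (hM hx.1).1)
  obtain ⟨μ, hμmem, hμmax⟩ := Set.exists_max_image _ (fun x => R.degS R.simples x) hfin
    ⟨ν, hν, R.rle_refl ν⟩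
  refine ⟨μ, ⟨hμmem.1, ?_⟩, hμmem.2⟩
  intro x hx hrle
  have hx' : x ∈ {x | x ∈ M ∧ R.rle ν x} := ⟨hx, R.rle_trans hμmem.2 hrle⟩
  have hle := hμmax x hx'
  obtain ⟨c, hc⟩ := hrle
  have hcoef := R.coeff_of_rle (hM hx).1 (hM hμmem.1).1 hc
  have hsum : R.degS R.simples x = R.degS R.simples μ + ∑ β ∈ R.simples, (c β : ℤ) := by
    unfold degS
    rw [← Finset.sum_add_distrib]
    exact Finset.sum_congr rfl (fun β hβ => hcoef β hβ)
  have hsz : ∑ β ∈ R.simples, (c β : ℤ) = 0 := by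
    have h1 : (0:ℤ) ≤ ∑ β ∈ R.simples, (c β : ℤ) :=
      Finset.sum_nonneg (fun β _ => Int.natCast_nonneg _)
    have h2 : R.degS R.simples x ≤ R.degS R.simples μ := hle
    omega
  have hz := (Finset.sum_eq_zero_iff_of_nonneg
    (fun β _ => Int.natCast_nonneg (c β))).mp hsz
  have hx0 : x - μ = 0 := by
    rw [hc]
    exact Finset.sum_eq_zero (fun β hβ => by rw [hz β hβ, zero_smul])
  exact sub_eq_zero.mp hx0

/-! ### String lemmas -/

lemma neg_mem {γ : V} (hγ : γ ∈ R.roots) : -γ ∈ R.roots := by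
  have h := R.reflClosed γ hγ γ hγ
  have hγγ : ⟪γ, γ⟫_ℝ ≠ 0 := (inner_self_pos_of_ne (R.nonzero γ hγ)).ne'
  have heq : γ - (2 * ⟪γ, γ⟫_ℝ / ⟪γ, γ⟫_ℝ) • γ = -γ := by
    rw [mul_div_assoc, div_self hγγ, mul_one, two_smul]
    abel
  rwa [heq] at h

lemma root_add {γ δ : V} (hγ : γ ∈ R.roots) (hδ : δ ∈ R.roots)
    (hneg : ⟪γ, δ⟫_ℝ < 0) (hne : γ + δ ≠ 0) : γ + δ ∈ R.roots := by
  obtain ⟨k₁, hk₁⟩ := R.crystal δ hδ γ hγ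
  obtain ⟨k₂, hk₂⟩ := R.crystal γ hγ δ hδ
  have hγγ : (0:ℝ) < ⟪γ, γ⟫_ℝ := inner_self_pos_of_ne (R.nonzero γ hγ)
  have hδδ : (0:ℝ) < ⟪δ, δ⟫_ℝ := inner_self_pos_of_ne (R.nonzero δ hδ)
  rw [div_eq_iff hδδ.ne'] at hk₁
  rw [div_eq_iff hγγ.ne'] at hk₂
  rw [real_inner_comm γ δ] at hk₂
  have hk₁neg : k₁ ≤ -1 := by
    have h1 : (k₁:ℝ) * ⟪δ, δ⟫_ℝ < 0 := by rw [← hk₁]; linarith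
    have h2 : (k₁:ℝ) < 0 := by nlinarith
    have h3 : k₁ < 0 := by exact_mod_cast h2
    omega
  have hk₂neg : k₂ ≤ -1 := by
    have h1 : (k₂:ℝ) * ⟪γ, γ⟫_ℝ < 0 := by rw [← hk₂]; linarith
    have h2 : (k₂:ℝ) < 0 := by nlinarith
    have h3 : k₂ < 0 := by exact_mod_cast h2
    omega
  have hcs : ⟪γ, δ⟫_ℝ * ⟪γ, δ⟫_ℝ ≤ ⟪γ, γ⟫_ℝ * ⟪δ, δ⟫_ℝ := real_inner_mul_inner_self_le γ δ
  have key : (k₁:ℝ) * k₂ * (⟪γ, γ⟫_ℝ * ⟪δ, δ⟫_ℝ) = 4 * (⟪γ, δ⟫_ℝ * ⟪γ, δ⟫_ℝ) := by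
    calc (k₁:ℝ) * k₂ * (⟪γ, γ⟫_ℝ * ⟪δ, δ⟫_ℝ)
        = ((k₁:ℝ) * ⟪δ, δ⟫_ℝ) * ((k₂:ℝ) * ⟪γ, γ⟫_ℝ) := by ring
      _ = (2 * ⟪γ, δ⟫_ℝ) * (2 * ⟪γ, δ⟫_ℝ) := by rw [← hk₁, ← hk₂]
      _ = 4 * (⟪γ, δ⟫_ℝ * ⟪γ, δ⟫_ℝ) := by ring
  have hprod : (k₁:ℝ) * k₂ ≤ 4 := by nlinarith [mul_pos hγγ hδδ]
  have hprodZ : k₁ * k₂ ≤ 4 := by exact_mod_cast hprod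
  by_cases hc1 : k₁ = -1
  · have h := R.reflClosed δ hδ γ hγ
    have heq : 2 * ⟪γ, δ⟫_ℝ / ⟪δ, δ⟫_ℝ = -1 := by
      rw [div_eq_iff hδδ.ne', hk₁, hc1]; push_cast; ring
    rw [heq] at h
    simpa using h
  · by_cases hc2 : k₂ = -1
    · have h := R.reflClosed γ hγ δ hδ
      have heq : 2 * ⟪δ, γ⟫_ℝ / ⟪γ, γ⟫_ℝ = -1 := by
        rw [div_eq_iff hγγ.ne', real_inner_comm γ δ, hk₂, hc2]; push_cast; ring
      rw [heq] at h
      have : δ - (-1:ℝ) • γ = γ + δ := by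
        rw [neg_one_smul]; abel
      rwa [this] at h
    · exfalso
      have hk₁' : k₁ ≤ -2 := by omega
      have hk₂' : k₂ ≤ -2 := by omega
      have h4 : k₁ * k₂ = 4 := by nlinarith
      have hk₁2 : k₁ = -2 := by nlinarith
      have hk₂2 : k₂ = -2 := by nlinarith
      have e₁ : ⟪γ, δ⟫_ℝ = -⟪δ, δ⟫_ℝ := by
        rw [hk₁2] at hk₁; push_cast at hk₁; linarith
      have e₂ : ⟪γ, δ⟫_ℝ = -⟪γ, γ⟫_ℝ := by
        rw [hk₂2] at hk₂; push_cast at hk₂; linarith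
      have hz : ⟪γ + δ, γ + δ⟫_ℝ = 0 := by
        have hexp : ⟪γ + δ, γ + δ⟫_ℝ
            = ⟪γ, γ⟫_ℝ + ⟪γ, δ⟫_ℝ + ⟪δ, γ⟫_ℝ + ⟪δ, δ⟫_ℝ := by
          simp only [inner_add_left, inner_add_right]; ring
        rw [hexp, real_inner_comm γ δ]
        linarith
      rw [inner_self_eq_zero] at hz
      exact hne hz

lemma root_sub {γ δ : V} (hγ : γ ∈ R.roots) (hδ : δ ∈ R.roots)
    (hpos : 0 < ⟪γ, δ⟫_ℝ) (hne : γ ≠ δ) : γ - δ ∈ R.roots := by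
  have h := R.root_add hγ (R.neg_mem hδ)
    (by rw [inner_neg_right]; linarith)
    (by rw [← sub_eq_add_neg]; exact sub_ne_zero.mpr hne)
  rwa [← sub_eq_add_neg] at h

/-! ### Simple roots and positivity -/

lemma sub_not_root {α β : V} (hα : α ∈ R.simples) (hβ : β ∈ R.simples) (hne : α ≠ β) :
    α - β ∉ R.roots := by
  intro hroot
  have hrep : α - β = ∑ b ∈ R.simples,
      ((if b = α then (1:ℤ) else 0) - (if b = β then 1 else 0)) • b := by
    simp only [sub_smul, Finset.sum_sub_distrib]
    rw [← R.single_rep hα, ← R.single_rep hβ]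
  have hco := R.coeff_unique hroot _ hrep
  rcases R.coeff_sign _ hroot with hp | hn
  · have h1 := hp β hβ
    rw [hco β hβ, if_neg (Ne.symm hne), if_pos rfl] at h1
    omega
  · have h1 := hn α hα
    rw [hco α hα, if_pos rfl, if_neg hne] at h1
    omega

lemma simple_inner_nonpos {α β : V} (hα : α ∈ R.simples) (hβ : β ∈ R.simples)
    (hne : α ≠ β) : ⟪α, β⟫_ℝ ≤ 0 := by
  by_contra h
  push_neg at h
  exact R.sub_not_root hα hβ hne
    (R.root_sub (R.simples_sub hα) (R.simples_sub hβ) h hne)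

lemma sub_single_pos {ρ α : V} (hρ : ρ ∈ R.posRoots) (hα : α ∈ R.simples)
    (hroot : ρ - α ∈ R.roots) (hne : ρ ≠ α) : ρ - α ∈ R.posRoots := by
  have hrep : ρ - α = ∑ β ∈ R.simples,
      (R.coeff ρ β - if β = α then 1 else 0) • β := by
    simp only [sub_smul, Finset.sum_sub_distrib]
    rw [← R.coeff_spec ρ hρ.1, ← R.single_rep hα]
  have hco := R.coeff_unique hroot _ hrep
  rcases R.coeff_sign _ hroot with hp | hn
  · exact ⟨hroot, hp⟩
  · exfalso
    have hρβ : ∀ β ∈ R.simples, β ≠ α → R.coeff ρ β = 0 := by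
      intro β hβ hne'
      have h1 := hn β hβ
      rw [hco β hβ, if_neg hne'] at h1
      have h2 := hρ.2 β hβ
      omega
    have h1 := hn α hα
    rw [hco α hα, if_pos rfl] at h1
    have h2 := hρ.2 α hα
    have hcases : R.coeff ρ α = 0 ∨ R.coeff ρ α = 1 := by omega
    rcases hcases with h0 | h01
    · have : ρ = 0 := by
        rw [R.coeff_spec ρ hρ.1]
        apply Finset.sum_eq_zero
        intro β hβ
        by_cases hbα : β = α
        · rw [hbα, h0, zero_smul]
        · rw [hρβ β hβ hbα, zero_smul]
      exact R.nonzero ρ hρ.1 this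
    · have : ρ = α := by
        rw [R.coeff_spec ρ hρ.1]
        rw [Finset.sum_eq_single α
          (fun b hb hbne => by rw [hρβ b hb hbne, zero_smul])
          (fun h => absurd hα h)]
        rw [h01, one_smul]
      exact hne this

lemma root_add_add {ξ α β : V} (hξ : ξ ∈ R.roots) (hα : α ∈ R.simples) (hβ : β ∈ R.simples)
    (hne : α ≠ β) (hξα : ξ + α ∈ R.posRoots) (hξβ : ξ + β ∈ R.roots) :
    ξ + α + β ∈ R.roots := by
  by_contra hcon
  have hne0 : ξ + α + β ≠ 0 := by
    rw [add_assoc, add_comm α β, ← add_assoc]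
    intro h0
    exact R.pos_add_ne_zero hξα (R.simple_pos hβ)
      (by rw [← h0]; abel)
  have h1 : 0 ≤ ⟪ξ + α, β⟫_ℝ := by
    by_contra h
    push_neg at h
    exact hcon (R.root_add hξα.1 (R.simples_sub hβ) h hne0)
  have h2 : 0 ≤ ⟪ξ + β, α⟫_ℝ := by
    by_contra h
    push_neg at h
    have := R.root_add hξβ (R.simples_sub hα) h
      (by rw [show ξ + β + α = ξ + α + β from by abel]; exact hne0)
    rw [show ξ + β + α = ξ + α + β from by abel] at this
    exact hcon this
  have h3 : ⟪α, β⟫_ℝ ≤ 0 := R.simple_inner_nonpos hα hβ hne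
  have hξξ : (0:ℝ) < ⟪ξ, ξ⟫_ℝ := inner_self_pos_of_ne (R.nonzero ξ hξ)
  have h4 : 0 < ⟪ξ + α, ξ + β⟫_ℝ := by
    have hexp : ⟪ξ + α, ξ + β⟫_ℝ
        = ⟪ξ, ξ⟫_ℝ + ⟪ξ, β⟫_ℝ + ⟪α, ξ⟫_ℝ + ⟪α, β⟫_ℝ := by
      simp only [inner_add_left, inner_add_right]; ring
    have e1 : ⟪ξ + α, β⟫_ℝ = ⟪ξ, β⟫_ℝ + ⟪α, β⟫_ℝ := by
      simp only [inner_add_left]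
    have e2 : ⟪ξ + β, α⟫_ℝ = ⟪ξ, α⟫_ℝ + ⟪β, α⟫_ℝ := by
      simp only [inner_add_left]
    have e3 : ⟪α, ξ⟫_ℝ = ⟪ξ, α⟫_ℝ := real_inner_comm ξ α
    have e4 : ⟪β, α⟫_ℝ = ⟪α, β⟫_ℝ := real_inner_comm α β
    rw [hexp, e3]
    rw [e1] at h1
    rw [e2, e4] at h2
    linarith
  have h5 : ξ + α ≠ ξ + β := fun h => hne (add_left_cancel h)
  have h6 := R.root_sub hξα.1 hξβ h4 h5
  rw [show ξ + α - (ξ + β) = α - β from by abel] at h6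
  exact R.sub_not_root hα hβ hne h6

/-! ### The highest root -/

lemma theta_inner_nonneg (θ : V) (hθ : R.IsHighest θ) {ρ : V} (hρ : ρ ∈ R.posRoots) :
    0 ≤ ⟪θ, ρ⟫_ℝ := by
  by_contra h
  push_neg at h
  have hroot : θ + ρ ∈ R.roots :=
    R.root_add hθ.1.1 hρ.1 h (R.pos_add_ne_zero hθ.1 hρ)
  obtain ⟨c, hc⟩ := hθ.2 _ hroot
  have hc' : -ρ = ∑ β ∈ R.simples, (c β : ℤ) • β := by
    rw [← hc]; abel
  have h0 : ∑ β ∈ R.simples, (R.coeff ρ β + (c β : ℤ)) • β = 0 := by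
    simp only [add_smul, Finset.sum_add_distrib]
    rw [← R.coeff_spec ρ hρ.1, ← hc']
    abel
  have hz := R.sum_zero_int _ h0
  have : ρ = 0 := by
    rw [R.coeff_spec ρ hρ.1]
    apply Finset.sum_eq_zero
    intro β hβ
    have h1 := hz β hβ
    have h2 := hρ.2 β hβ
    have h3 : (0:ℤ) ≤ (c β : ℤ) := Int.natCast_nonneg _
    have : R.coeff ρ β = 0 := by omega
    rw [this, zero_smul]
  exact R.nonzero ρ hρ.1 this

lemma pos_of_theta_sub (θ : V) (hθ : R.IsHighest θ) {ρ : V} (hρ : ρ ∈ R.roots)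
    (h : θ - ρ ∈ R.roots) : θ - ρ ∈ R.posRoots := by
  obtain ⟨c, hc⟩ := hθ.2 ρ hρ
  exact R.pos_of_rep h _ (fun β _ => Int.natCast_nonneg _) hc

lemma theta_mem {J : Set V} (hJup : R.IsUpperIdeal J) (hne : J.Nonempty)
    (θ : V) (hθ : R.IsHighest θ) : θ ∈ J := by
  obtain ⟨x, hx⟩ := hne
  exact hJup.2 x hx θ hθ.1 (hθ.2 x (hJup.1 hx).1)

lemma abelian_inner_nonneg {J : Set V} (hJ : R.IsAbelianIdeal J) {x y : V}
    (hx : x ∈ J) (hy : y ∈ J) : 0 ≤ ⟪x, y⟫_ℝ := by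
  by_contra h
  push_neg at h
  exact hJ.2 x hx y hy (R.root_add (hJ.1.1 hx).1 (hJ.1.1 hy).1 h
    (R.pos_add_ne_zero (hJ.1.1 hx) (hJ.1.1 hy)))

/-! ### Chain lemma -/

lemma inner_rep (c : V → ℕ) (z : V) :
    ⟪∑ β ∈ R.simples, (c β : ℤ) • β, z⟫_ℝ = ∑ β ∈ R.simples, (c β : ℝ) * ⟪β, z⟫_ℝ := by
  rw [sum_inner]
  refine Finset.sum_congr rfl (fun β _ => ?_)
  rw [← Int.cast_smul_eq_zsmul ℝ, real_inner_smul_left]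
  push_cast
  ring

lemma chain_step : ∀ n : ℕ, ∀ x y : V, x ∈ R.posRoots → y ∈ R.posRoots → x ≠ y →
    ∀ c : V → ℕ, (y - x = ∑ β ∈ R.simples, (c β : ℤ) • β) → (∑ β ∈ R.simples, c β ≤ n) →
    ∃ β ∈ R.simples, (x + β ∈ R.posRoots ∧ R.rle (x + β) y) := by
  intro n
  induction n with
  | zero =>
    intro x y hx hy hne c hc hcb
    exfalso
    have hs0 : ∑ β ∈ R.simples, c β = 0 := Nat.le_zero.mp hcb
    have hz := Finset.sum_eq_zero_iff.mp hs0
    have : y - x = 0 := by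
      rw [hc]
      exact Finset.sum_eq_zero (fun β hβ => by rw [hz β hβ]; simp)
    exact hne (sub_eq_zero.mp this).symm
  | succ n ih =>
    intro x y hx hy hne c hc hcb
    have hd0 : y - x ≠ 0 := sub_ne_zero.mpr (Ne.symm hne)
    have hdd : (0:ℝ) < ⟪y - x, y - x⟫_ℝ := inner_self_pos_of_ne hd0
    have hsplit : 0 < ⟪y - x, y⟫_ℝ ∨ ⟪y - x, x⟫_ℝ < 0 := by
      by_contra hcc
      push_neg at hcc
      have hsr := inner_sub_right (𝕜 := ℝ) (y - x) y x
      rw [hsr] at hdd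
      linarith [hcc.1, hcc.2]
    rcases hsplit with hcase | hcase
    · -- exists β with c β > 0 and ⟪β, y⟫ > 0
      have hterm : ∃ β ∈ R.simples, 0 < c β ∧ 0 < ⟪β, y⟫_ℝ := by
        by_contra hcon
        push_neg at hcon
        have hle : ⟪y - x, y⟫_ℝ ≤ 0 := by
          rw [hc, R.inner_rep]
          apply Finset.sum_nonpos
          intro β hβ
          rcases Nat.eq_zero_or_pos (c β) with h0 | hp
          · simp [h0]
          · have hby := hcon β hβ hp
            have : (0:ℝ) ≤ (c β : ℝ) := Nat.cast_nonneg _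
            nlinarith
        linarith
      obtain ⟨β, hβ, hcβ, hβy⟩ := hterm
      have hyβ : y ≠ β := by
        intro hyβ
        have hxrep : x = ∑ b ∈ R.simples,
            ((if b = β then (1:ℤ) else 0) - (c b : ℤ)) • b := by
          simp only [sub_smul, Finset.sum_sub_distrib]
          rw [← R.single_rep hβ, ← hc, ← hyβ]
          abel
        have hco := R.coeff_unique hx.1 _ hxrep
        have hcβ1 : 1 ≤ c β := hcβ
        have hzero : ∀ b ∈ R.simples, R.coeff x b = 0 := by
          intro b hb
          have h1 := hx.2 b hb
          have h2 := hco b hb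
          by_cases hbβ : b = β
          · subst hbβ; rw [if_pos rfl] at h2; omega
          · rw [if_neg hbβ] at h2; omega
        have : x = 0 := by
          rw [R.coeff_spec x hx.1]
          exact Finset.sum_eq_zero (fun b hb => by rw [hzero b hb, zero_smul])
        exact R.nonzero x hx.1 this
      have hyβroot : y - β ∈ R.roots :=
        R.root_sub hy.1 (R.simples_sub hβ) (by rwa [real_inner_comm]) hyβ
      have hyβpos : y - β ∈ R.posRoots := R.sub_single_pos hy hβ hyβroot hyβ
      by_cases hxyβ : x = y - β
      · refine ⟨β, hβ, ?_, ?_⟩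
        · rw [hxyβ, sub_add_cancel]; exact hy
        · rw [hxyβ, sub_add_cancel]; exact R.rle_refl y
      · have hcβ1 : 1 ≤ c β := hcβ
        set c' : V → ℕ := fun b => if b = β then c b - 1 else c b with hc'def
        have heq' : (y - β) - x = ∑ b ∈ R.simples, (c' b : ℤ) • b := by
          have h1 : (y - β) - x = (y - x) - β := by abel
          rw [h1, hc]
          conv_lhs => rw [R.single_rep hβ]
          rw [← Finset.sum_sub_distrib]
          refine Finset.sum_congr rfl (fun b _ => ?_)
          rw [← sub_smul]
          congr 1
          simp only [hc'def]
          split_ifs with h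
          · subst h; omega
          · simp
        have hb1 : c β + ∑ b ∈ R.simples.erase β, c b = ∑ b ∈ R.simples, c b :=
          Finset.add_sum_erase _ _ hβ
        have hb2 : c' β + ∑ b ∈ R.simples.erase β, c' b = ∑ b ∈ R.simples, c' b :=
          Finset.add_sum_erase _ _ hβ
        have hb3 : ∑ b ∈ R.simples.erase β, c' b = ∑ b ∈ R.simples.erase β, c b :=
          Finset.sum_congr rfl (fun b hb => by
            simp only [hc'def]
            rw [if_neg (Finset.ne_of_mem_erase hb)])
        have hc'β : c' β = c β - 1 := by simp [hc'def]
        have hbound : ∑ b ∈ R.simples, c' b ≤ n := by omega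
        obtain ⟨β', hβ', hq1, hq2⟩ := ih x (y - β) hx hyβpos hxyβ c' heq' hbound
        exact ⟨β', hβ', hq1, R.rle_trans hq2 (R.rle_sub_single hβ)⟩
    · -- exists β with c β > 0 and ⟪β, x⟫ < 0
      have hterm : ∃ β ∈ R.simples, 0 < c β ∧ ⟪β, x⟫_ℝ < 0 := by
        by_contra hcon
        push_neg at hcon
        have hge : (0:ℝ) ≤ ⟪y - x, x⟫_ℝ := by
          rw [hc, R.inner_rep]
          apply Finset.sum_nonneg
          intro β hβ
          rcases Nat.eq_zero_or_pos (c β) with h0 | hp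
          · simp [h0]
          · have hbx := hcon β hβ hp
            have : (0:ℝ) ≤ (c β : ℝ) := Nat.cast_nonneg _
            nlinarith
        linarith
      obtain ⟨β, hβ, hcβ, hβx⟩ := hterm
      have hxβroot : x + β ∈ R.roots :=
        R.root_add hx.1 (R.simples_sub hβ) (by rwa [real_inner_comm])
          (R.pos_add_ne_zero hx (R.simple_pos hβ))
      have hxβpos : x + β ∈ R.posRoots := R.pos_add_single hx hβ hxβroot
      have hcβ1 : 1 ≤ c β := hcβ
      set c' : V → ℕ := fun b => if b = β then c b - 1 else c b with hc'def
      refine ⟨β, hβ, hxβpos, c', ?_⟩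
      have h1 : y - (x + β) = (y - x) - β := by abel
      rw [h1, hc]
      conv_lhs => rw [R.single_rep hβ]
      rw [← Finset.sum_sub_distrib]
      refine Finset.sum_congr rfl (fun b _ => ?_)
      rw [← sub_smul]
      congr 1
      simp only [hc'def]
      split_ifs with h
      · subst h; omega
      · simp

/-! ### Climbing inside the complement -/

lemma climb {J : Set V} (hJup : R.IsUpperIdeal J) {μ α : V} (hα : α ∈ R.simples)
    (hμ : μ ∈ R.posRoots) (hμJ : μ ∉ J) :
    ∀ n : ℕ, ∀ ξ : V, ξ ∈ R.posRoots → ξ ∉ J → ξ + α ∈ R.posRoots → ξ + α ∈ J →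
      ∀ c : V → ℕ, (μ - ξ = ∑ β ∈ R.simples, (c β : ℤ) • β) →
      (∑ β ∈ R.simples, c β ≤ n) → (μ + α ∈ R.posRoots ∧ μ + α ∈ J) := by
  intro n
  induction n with
  | zero =>
    intro ξ hξ hξJ hξα hξαJ c hc hcb
    have hs0 : ∑ β ∈ R.simples, c β = 0 := Nat.le_zero.mp hcb
    have hz := Finset.sum_eq_zero_iff.mp hs0
    have hμξ : μ = ξ := by
      have : μ - ξ = 0 := by
        rw [hc]
        exact Finset.sum_eq_zero (fun β hβ => by rw [hz β hβ]; simp)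
      exact sub_eq_zero.mp this
    rw [hμξ]
    exact ⟨hξα, hξαJ⟩
  | succ n ih =>
    intro ξ hξ hξJ hξα hξαJ c hc hcb
    by_cases heq : μ = ξ
    · rw [heq]; exact ⟨hξα, hξαJ⟩
    · obtain ⟨β, hβ, hξβpos, hrle⟩ :=
        R.chain_step (n+1) ξ μ hξ hμ (fun h => heq h.symm) c hc hcb
      have hξβJ : ξ + β ∉ J := fun hmem => hμJ (hJup.2 _ hmem μ hμ hrle)
      have hαβ : α ≠ β := fun h => hξβJ (h ▸ hξαJ)
      have hroot : ξ + α + β ∈ R.roots :=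
        R.root_add_add hξ.1 hα hβ hαβ hξα hξβpos.1
      have hpos2 : ξ + α + β ∈ R.posRoots := R.pos_add_single hξα hβ hroot
      have hJ2 : ξ + α + β ∈ J := hJup.2 _ hξαJ _ hpos2 (R.rle_add_single hβ)
      obtain ⟨c', hc'⟩ := hrle
      have hptw : ∀ b ∈ R.simples,
          (c b : ℤ) = (c' b : ℤ) + (if b = β then 1 else 0) := by
        apply R.rep_unique
        simp only [add_smul, Finset.sum_add_distrib]
        rw [← hc, ← hc', ← R.single_rep hβ]
        abel
      have hsum : ∑ b ∈ R.simples, (c b : ℤ)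
          = (∑ b ∈ R.simples, (c' b : ℤ)) + 1 := by
        rw [Finset.sum_congr rfl hptw, Finset.sum_add_distrib]
        congr 1
        rw [Finset.sum_ite_eq' R.simples β (fun _ => (1:ℤ)), if_pos hβ]
      have hsumN : (∑ b ∈ R.simples, c' b) + 1 = ∑ b ∈ R.simples, c b := by
        have h1 : ((∑ b ∈ R.simples, c' b : ℕ) : ℤ) + 1 = ((∑ b ∈ R.simples, c b : ℕ) : ℤ) := by
          push_cast
          omega
        exact_mod_cast h1
      refine ih (ξ + β) hξβpos hξβJ ?_ ?_ c' hc' (by omega)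
      · rw [add_right_comm]; exact hpos2
      · rw [add_right_comm]; exact hJ2

/-! ### Irreducibility: existence of an adjacent simple root -/

lemma exists_adjacent (hrk : 2 ≤ Module.finrank ℝ V) {α : V} (hα : α ∈ R.simples) :
    ∃ β ∈ R.simples, β ≠ α ∧ ⟪α, β⟫_ℝ < 0 := by
  by_contra hcon
  push_neg at hcon
  have horth : ∀ β ∈ R.simples, β ≠ α → ⟪α, β⟫_ℝ = 0 :=
    fun β hβ hne => le_antisymm (R.simple_inner_nonpos hα hβ (Ne.symm hne)) (hcon β hβ hne)
  have hα0 : α ≠ 0 := R.nonzero α (R.simples_sub hα)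
  have hαα : (0:ℝ) < ⟪α, α⟫_ℝ := inner_self_pos_of_ne hα0
  have hex : ∃ β ∈ R.simples, β ≠ α := by
    by_contra hc
    push_neg at hc
    have hsp : R.roots ⊆ (Submodule.span ℝ ({α} : Set V) : Set V) := by
      intro γ hγ
      rw [R.coeff_spec γ hγ]
      refine Submodule.sum_mem _ (fun β hβ => ?_)
      rw [hc β hβ, ← Int.cast_smul_eq_zsmul ℝ]
      exact Submodule.smul_mem _ _ (Submodule.mem_span_singleton_self α)
    have hle : (⊤ : Submodule ℝ V) ≤ Submodule.span ℝ {α} := by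
      rw [← R.spans]; exact Submodule.span_le.mpr hsp
    have heq : Submodule.span ℝ ({α} : Set V) = ⊤ := top_le_iff.mp hle
    have h1 : Module.finrank ℝ V = 1 := by
      rw [← finrank_top ℝ V, ← heq, finrank_span_singleton hα0]
    omega
  obtain ⟨β₀, hβ₀, hβ₀ne⟩ := hex
  have hmult : ∀ b ∈ R.roots, ⟪α, b⟫_ℝ ≠ 0 → ∃ t : ℝ, b = t • α := by
    intro b hb hnz
    have hbrep := R.coeff_spec b hb
    have hinner : ⟪b, α⟫_ℝ = (R.coeff b α : ℝ) * ⟪α, α⟫_ℝ := by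
      conv_lhs => rw [hbrep]
      rw [sum_inner, Finset.sum_eq_single α]
      · rw [← Int.cast_smul_eq_zsmul ℝ, real_inner_smul_left]
      · intro β hβ hne
        rw [← Int.cast_smul_eq_zsmul ℝ, real_inner_smul_left, real_inner_comm,
          horth β hβ hne, mul_zero]
      · intro h; exact absurd hα h
    have hcnz : R.coeff b α ≠ 0 := by
      intro h0
      rw [h0] at hinner
      simp only [Int.cast_zero, zero_mul] at hinner
      exact hnz (by rw [real_inner_comm]; exact hinner)
    have hrefl := R.reflClosed α (R.simples_sub hα) b hb
    have hquot : 2 * ⟪b, α⟫_ℝ / ⟪α, α⟫_ℝ = ((2 * R.coeff b α : ℤ) : ℝ) := by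
      rw [hinner]
      field_simp
      push_cast
      ring
    rw [hquot, Int.cast_smul_eq_zsmul] at hrefl
    have hsrep : b - (2 * R.coeff b α) • α = ∑ β ∈ R.simples,
        (R.coeff b β - if β = α then 2 * R.coeff b α else 0) • β := by
      simp only [sub_smul, Finset.sum_sub_distrib]
      rw [← hbrep]
      congr 1
      rw [Finset.sum_eq_single α]
      · rw [if_pos rfl]
      · intro β _ hne; rw [if_neg hne, zero_smul]
      · intro h; exact absurd hα h
    have hcos := R.coeff_unique hrefl _ hsrep
    have hzero : ∀ β ∈ R.simples, β ≠ α → R.coeff b β = 0 := by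
      intro β hβ hne
      have hsβ : R.coeff (b - (2 * R.coeff b α) • α) β = R.coeff b β := by
        rw [hcos β hβ, if_neg hne]; ring
      have hsα : R.coeff (b - (2 * R.coeff b α) • α) α = -(R.coeff b α) := by
        rw [hcos α hα, if_pos rfl]; ring
      rcases R.coeff_sign b hb with hb1 | hb1 <;>
        rcases R.coeff_sign _ hrefl with hs1 | hs1
      · have e1 := hs1 α hα
        have e2 := hb1 α hα
        rw [hsα] at e1
        omega
      · have e1 := hb1 β hβ
        have e2 := hs1 β hβ
        rw [hsβ] at e2
        omega
      · have e1 := hb1 β hβ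
        have e2 := hs1 β hβ
        rw [hsβ] at e2
        omega
      · have e1 := hs1 α hα
        have e2 := hb1 α hα
        rw [hsα] at e1
        omega
    refine ⟨(R.coeff b α : ℝ), ?_⟩
    conv_lhs => rw [hbrep]
    rw [Finset.sum_eq_single α]
    · rw [← Int.cast_smul_eq_zsmul ℝ]
    · intro β hβ hne; rw [hzero β hβ hne, zero_smul]
    · intro h; exact absurd hα h
  have hunion : R.roots = {x ∈ R.roots | ⟪α, x⟫_ℝ ≠ 0} ∪ {x ∈ R.roots | ⟪α, x⟫_ℝ = 0} := by
    ext x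
    constructor
    · intro hx
      by_cases h : ⟪α, x⟫_ℝ = 0
      · exact Or.inr ⟨hx, h⟩
      · exact Or.inl ⟨hx, h⟩
    · rintro (h | h) <;> exact h.1
  have hperp : ∀ a ∈ {x ∈ R.roots | ⟪α, x⟫_ℝ ≠ 0}, ∀ b ∈ {x ∈ R.roots | ⟪α, x⟫_ℝ = 0},
      ⟪a, b⟫_ℝ = 0 := by
    intro a ha b hb
    obtain ⟨t, ht⟩ := hmult a ha.1 ha.2
    rw [ht, real_inner_smul_left]
    rw [hb.2, mul_zero]
  rcases R.irred _ _ hunion hperp with h | h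
  · have hmem : α ∈ {x ∈ R.roots | ⟪α, x⟫_ℝ ≠ 0} := ⟨R.simples_sub hα, hαα.ne'⟩
    rw [h] at hmem
    exact hmem
  · have hmem : β₀ ∈ {x ∈ R.roots | ⟪α, x⟫_ℝ = 0} :=
      ⟨R.simples_sub hβ₀, horth β₀ hβ₀ hβ₀ne⟩
    rw [h] at hmem
    exact hmem

/-! ### The key lemma -/

lemma key (θ : V) (hθ : R.IsHighest θ) (J : Set V) (hJ : R.IsAbelianIdeal J)
    (I : Set V) (hIdef : I = R.Hset θ ∩ J)
    (hminmax : R.minSet I = {x : V | ∃ γ ∈ R.maxSet (R.posRoots \ J), x = θ - γ})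
    {ν α : V} (hν : ν ∈ R.posRoots) (hνJ : ν ∉ J) (hα : α ∈ R.simples)
    (hνα : ν + α ∈ R.posRoots) (hναJ : ν + α ∈ J) :
    ∃ δ ∈ R.minSet I, ((δ - α ∈ R.posRoots) ∨ δ = α) := by
  have hνM : ν ∈ R.posRoots \ J := ⟨hν, hνJ⟩
  obtain ⟨μ, hμmax, hrle⟩ := R.exists_max (M := R.posRoots \ J) Set.diff_subset hνM
  have hμpos : μ ∈ R.posRoots := hμmax.1.1
  have hμJ : μ ∉ J := hμmax.1.2
  obtain ⟨c, hc⟩ := hrle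
  obtain ⟨hμαpos, hμαJ⟩ := R.climb hJ.1 hα hμpos hμJ (∑ β ∈ R.simples, c β)
    ν hν hνJ hνα hναJ c hc le_rfl
  have hδmin : θ - μ ∈ R.minSet I := by
    rw [hminmax]
    exact ⟨μ, hμmax, rfl⟩
  have hδI : θ - μ ∈ I := hδmin.1
  rw [hIdef] at hδI
  obtain ⟨hδH, hδJ⟩ := hδI
  have hδpos : θ - μ ∈ R.posRoots := hδH.1
  by_cases hδα : θ - μ = α
  · exact ⟨θ - μ, hδmin, Or.inr hδα⟩
  · refine ⟨θ - μ, hδmin, Or.inl ?_⟩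
    by_cases hip : 0 < ⟪θ, μ + α⟫_ℝ
    · have hne : θ ≠ μ + α := by
        intro h
        apply hδα
        rw [h]
        abel
      have hroot := R.root_sub hθ.1.1 hμαpos.1 hip hne
      have hpos := R.pos_of_theta_sub θ hθ hμαpos.1 hroot
      rw [show θ - μ - α = θ - (μ + α) from by abel]
      exact hpos
    · have h0 : ⟪θ, μ + α⟫_ℝ = 0 :=
        le_antisymm (not_lt.mp hip) (R.theta_inner_nonneg θ hθ hμαpos)
      have hab : 0 ≤ ⟪θ - μ, μ + α⟫_ℝ := R.abelian_inner_nonneg hJ hδJ hμαJ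
      have hμμ : (0:ℝ) < ⟪μ, μ⟫_ℝ := inner_self_pos_of_ne (R.nonzero μ hμpos.1)
      have hθα : 0 ≤ ⟪θ, α⟫_ℝ := R.theta_inner_nonneg θ hθ (R.simple_pos hα)
      have hexp : ⟪θ - μ, μ + α⟫_ℝ = ⟪θ, μ + α⟫_ℝ - ⟪μ, μ⟫_ℝ - ⟪μ, α⟫_ℝ := by
        simp only [inner_sub_left, inner_add_right]
        ring
      have hθμα : ⟪θ, μ + α⟫_ℝ = ⟪θ, μ⟫_ℝ + ⟪θ, α⟫_ℝ := by
        simp only [inner_add_right]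
      have hδαinner : 0 < ⟪θ - μ, α⟫_ℝ := by
        have hsub : ⟪θ - μ, α⟫_ℝ = ⟪θ, α⟫_ℝ - ⟪μ, α⟫_ℝ := by
          simp only [inner_sub_left]
        rw [hexp, h0] at hab
        rw [hsub]
        linarith
      have hroot := R.root_sub hδpos.1 (R.simples_sub hα) hδαinner hδα
      exact R.sub_single_pos hδpos hα hroot hδα

end RootSystemData

/-- Theorem 3.5: let `J` be a nonempty abelian upper ideal, `J ≠ Δ⁺`,
`I = H ∩ J`, and assume `min(I) = {θ - γ : γ ∈ max(Δ⁺ ∖ J)}`. Then `S(J) ⊆ S(I)`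
(so the normaliser of `J` contains the normaliser of `I`). -/
theorem stmt7 {V : Type} [NormedAddCommGroup V] [InnerProductSpace ℝ V] [FiniteDimensional ℝ V]
    (R : RootSystemData V) (θ : V) (hθ : R.IsHighest θ)
    (hrk : 2 ≤ Module.finrank ℝ V)
    (J : Set V) (hJ : R.IsAbelianIdeal J) (hJne : J.Nonempty) (hJpr : J ≠ R.posRoots)
    (I : Set V) (hIdef : I = R.Hset θ ∩ J)
    (hminmax : R.minSet I = {x : V | ∃ γ ∈ R.maxSet (R.posRoots \ J), x = θ - γ}) :
    R.normS J ⊆ R.normS I := by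
  intro α hα
  obtain ⟨hαs, γ, hγmin, hcase⟩ := hα
  have hθJ : θ ∈ J := R.theta_mem hJ.1 hJne θ hθ
  rcases hcase with hsub | heq
  · -- γ - α is a positive root
    have hγJ : γ ∈ J := hγmin.1
    have hνJ : γ - α ∉ J := by
      intro hmem
      have h1 := hγmin.2 _ hmem (R.rle_sub_single hαs)
      have h2 : α = 0 := sub_eq_self.mp h1
      exact R.nonzero α (R.simples_sub hαs) h2
    obtain ⟨δ, hδ, hor⟩ := R.key θ hθ J hJ I hIdef hminmax hsub hνJ hαs
      (by rw [sub_add_cancel]; exact hJ.1.1 hγJ)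
      (by rw [sub_add_cancel]; exact hγJ)
    exact ⟨hαs, δ, hδ, hor⟩
  · -- γ = α
    have hαJ : α ∈ J := heq ▸ hγmin.1
    have hθα := R.theta_inner_nonneg θ hθ (R.simple_pos hαs)
    rcases lt_or_eq_of_le hθα with hpos | hzero
    · -- ⟪θ, α⟫ > 0
      have hθne : θ ≠ α := by
        intro h
        obtain ⟨β, hβ, hβne, hβneg⟩ := R.exists_adjacent hrk hαs
        have hge := R.theta_inner_nonneg θ hθ (R.simple_pos hβ)
        rw [h] at hge
        linarith
      have hroot := R.root_sub hθ.1.1 (R.simples_sub hαs) hpos hθne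
      have hpos' := R.pos_of_theta_sub θ hθ (R.simples_sub hαs) hroot
      have hnJ : θ - α ∉ J := by
        intro hmem
        exact hJ.2 _ hmem _ hαJ (by rw [sub_add_cancel]; exact hθ.1.1)
      obtain ⟨δ, hδ, hor⟩ := R.key θ hθ J hJ I hIdef hminmax hpos' hnJ hαs
        (by rw [sub_add_cancel]; exact hθ.1)
        (by rw [sub_add_cancel]; exact hθJ)
      exact ⟨hαs, δ, hδ, hor⟩
    · -- ⟪θ, α⟫ = 0
      obtain ⟨β, hβ, hβne, hβneg⟩ := R.exists_adjacent hrk hαs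
      have hβpos := R.simple_pos hβ
      have hαβroot : α + β ∈ R.roots :=
        R.root_add (R.simples_sub hαs) (R.simples_sub hβ) hβneg
          (R.pos_add_ne_zero (R.simple_pos hαs) hβpos)
      have hβJ : β ∉ J := fun hmem => hJ.2 _ hαJ _ hmem hαβroot
      have hβαpos : β + α ∈ R.posRoots :=
        R.pos_add_single hβpos hαs (by rw [add_comm]; exact hαβroot)
      have hβαJ : β + α ∈ J := by
        have h1 := R.rle_add_single (ξ := α) hβ
        rw [add_comm α β] at h1
        exact hJ.1.2 _ hαJ _ hβαpos h1
      obtain ⟨δ, hδ, hor⟩ := R.key θ hθ J hJ I hIdef hminmax hβpos hβJ hαs hβαpos hβαJ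
      exact ⟨hαs, δ, hδ, hor⟩
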